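/- Let c : ℕ → ℝ be defined by c(n) = 0 for n ≤ 3 and, for n ≥ 4, c(n) = c(⌊n/2⌋) + c(⌊n/2⌋ − 1) + (3/2)·n + (1/2)·(n mod 2), and let b(x) = c(⌊x − 3⌋) for real x. Then for all real x ≥ 3, b(x) ≥ (3/2)·[x·(⌊log₂ x⌋ − 2) − x + 3]. -/

import Mathlib

/-!
Each level of the recurrence contributes `3/2 · n`, and there are about `log₂ n - 3` levels before
the arguments drop below `8`: by induction on `j`, `2 ^ (j + 3) ≤ n + 3` forces
`c n ≥ 3/2 · ((n + 4) j + 4)`. For `⌊log₂ x⌋ = j + 3` and `n = ⌊x - 3⌋` we have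
`2 ^ (j + 3) ≤ x < n + 4`, which gives the claim; for `⌊log₂ x⌋ ≤ 2` the bound is nonpositive
while `c ≥ 0`.
-/

lemma c_nonneg {c : ℕ → ℝ}
    (h0 : ∀ n ≤ 3, c n = 0)
    (hrec : ∀ n, 4 ≤ n →
      c n = c (n / 2) + c (n / 2 - 1) + 3 / 2 * (n : ℝ) + 1 / 2 * ((n % 2 : ℕ) : ℝ))
    (n : ℕ) : 0 ≤ c n := by
  induction n using Nat.strong_induction_on with
  | _ n ih =>
    rcases le_or_gt n 3 with hn | hn
    · rw [h0 n hn]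
    · rw [hrec n hn]
      have := ih (n / 2) (by omega)
      have := ih (n / 2 - 1) (by omega)
      positivity

/-- The additive constant `4` (instead of the `3` of the final bound) is what lets the inductive
step go through already from `j = 0`. -/
lemma c_ge_of_two_pow_le {c : ℕ → ℝ}
    (h0 : ∀ n ≤ 3, c n = 0)
    (hrec : ∀ n, 4 ≤ n →
      c n = c (n / 2) + c (n / 2 - 1) + 3 / 2 * (n : ℝ) + 1 / 2 * ((n % 2 : ℕ) : ℝ))
    (j : ℕ) : ∀ n : ℕ, 2 ^ (j + 3) ≤ n + 3 → 3 / 2 * (((n : ℝ) + 4) * j + 4) ≤ c n := by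
  induction j with
  | zero =>
    intro n hn
    rw [hrec n (by omega)]
    have hn5 : (5 : ℝ) ≤ n := by exact_mod_cast (by omega : 5 ≤ n)
    have := c_nonneg h0 hrec (n / 2)
    have := c_nonneg h0 hrec (n / 2 - 1)
    have : (0 : ℝ) ≤ ((n % 2 : ℕ) : ℝ) := Nat.cast_nonneg _
    push_cast
    linarith
  | succ j ih =>
    intro n hn
    have h8 : 2 ^ 3 ≤ 2 ^ (j + 3) := Nat.pow_le_pow_right two_pos (by omega)
    rw [show j + 1 + 3 = j + 3 + 1 by ring, pow_succ] at hn
    have hhalf := ih (n / 2) (by omega)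
    have hhalf_pred := ih (n / 2 - 1) (by omega)
    rw [hrec n (by omega)]
    have hhalf_cast : ((n / 2 - 1 : ℕ) : ℝ) = ((n / 2 : ℕ) : ℝ) - 1 := by
      rw [Nat.cast_sub (by omega), Nat.cast_one]
    have hdiv : (n : ℝ) = 2 * ((n / 2 : ℕ) : ℝ) + ((n % 2 : ℕ) : ℝ) := by
      exact_mod_cast (Nat.div_add_mod n 2).symm
    have hmod : ((n % 2 : ℕ) : ℝ) ≤ 1 := by exact_mod_cast Nat.le_of_lt_succ (Nat.mod_lt n two_pos)
    have hj : (0 : ℝ) ≤ j := Nat.cast_nonneg j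
    rw [hhalf_cast] at hhalf_pred
    push_cast
    nlinarith

lemma pow_le_of_le_floor_logb {b x : ℝ} (hb : 1 < b) (hx : 0 < x) {k : ℕ}
    (hk : (k : ℤ) ≤ ⌊Real.logb b x⌋) : b ^ k ≤ x := by
  rw [← Real.rpow_natCast, ← Real.le_logb_iff_rpow_le hb hx]
  exact le_trans (by exact_mod_cast hk) (Int.floor_le _)

theorem timsort_b_lower_bound (c : ℕ → ℝ) (b : ℝ → ℝ)
    (h0 : ∀ n ≤ 3, c n = 0)
    (hrec : ∀ n, 4 ≤ n →
      c n = c (n / 2) + c (n / 2 - 1) + 3 / 2 * (n : ℝ) + 1 / 2 * ((n % 2 : ℕ) : ℝ))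
    (hb : ∀ x : ℝ, b x = c ⌊x - 3⌋₊) :
    ∀ x : ℝ, 3 ≤ x →
      3 / 2 * (x * ((⌊Real.logb 2 x⌋ : ℝ) - 2) - x + 3) ≤ b x := by
  intro x hx
  rw [hb]
  set n := ⌊x - 3⌋₊
  have hxn : x < n + 4 := by linarith [Nat.lt_floor_add_one (x - 3)]
  obtain hk | ⟨j, hj⟩ : ⌊Real.logb 2 x⌋ ≤ 2 ∨ ∃ j : ℕ, ⌊Real.logb 2 x⌋ = (j + 3 : ℕ) := by
    by_cases hk : ⌊Real.logb 2 x⌋ ≤ 2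
    · exact .inl hk
    · exact .inr ⟨(⌊Real.logb 2 x⌋ - 3).toNat, by omega⟩
  · have hkR : (⌊Real.logb 2 x⌋ : ℝ) ≤ 2 := by exact_mod_cast hk
    nlinarith [c_nonneg h0 hrec n]
  · have hpow : (2 : ℝ) ^ (j + 3) ≤ x := pow_le_of_le_floor_logb one_lt_two (by linarith) hj.ge
    have hpow_nat : 2 ^ (j + 3) ≤ n + 3 := by
      have : ((2 ^ (j + 3) : ℕ) : ℝ) < n + 4 := by push_cast; linarith
      have : 2 ^ (j + 3) < n + 4 := by exact_mod_cast this
      omega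
    have hc := c_ge_of_two_pow_le h0 hrec j n hpow_nat
    rw [hj]
    push_cast
    nlinarith [mul_le_mul_of_nonneg_right hxn.le (Nat.cast_nonneg (α := ℝ) j)]
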